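/- arXiv:0909.3988 — 2 statements merged into one kernel-verified Lean document; each statement's English description precedes it below -/
import Mathlib

section
/- Let z₁, z₂, …, z_m ∈ ℂ and let H > 0. Then there exist l ∈ {1, …, m}, points c₁, …, c_l ∈ ℂ and radii r₁, …, r_l > 0 with Σ_{k=1}^l r_k² ≤ 4H², such that Σ_{k=1}^m 1/|z − z_k| ≤ 2m/H for every z ∈ ℂ lying outside the union of the open disks D(c_k, r_k), k = 1, …, l. -/
/-!
Put `ρ k = H √(k/m)`. Greedily pick the largest `p` for which some disk of radius `ρ p` holds at
least `p` of the remaining points, record the doubled disk and discard those points. A point `w`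
outside all recorded disks then has fewer than `k` of the `z j` within distance `ρ k`, for every
`k ≥ 1`: a point of a discarded cluster of size `p ≥ k` near `w` would put `w` in the doubled
disk, and `p < k` contradicts the maximality of `p`. Hence the `k`-th nearest point is at distance
at least `ρ k`, and `∑ 1/|w - z j| ≤ ∑ 1/ρ k ≤ 2m/H`. The squared radii `4ρ(p)² = 4H²p/m` add up to at
most `4H²` because the cluster sizes add up to at most `m`.
-/

open Finset Metric
open scoped Classical

section Covering

variable {X ι : Type*} [PseudoMetricSpace X] (z : ι → X) (ρ : ℕ → ℝ)

theorem exists_maximal_ball (hρ1 : 0 < ρ 1) {S : Finset ι} (hS : S.Nonempty) :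
    ∃ p c, 1 ≤ p ∧ p ≤ #{j ∈ S | z j ∈ ball c (ρ p)} ∧
      ∀ k, p < k → ∀ c', #{j ∈ S | z j ∈ ball c' (ρ k)} < k := by
  let P : ℕ → Prop := fun p => ∃ c, p ≤ #{j ∈ S | z j ∈ ball c (ρ p)}
  have hP1 : P 1 := by
    obtain ⟨j, hj⟩ := hS
    exact ⟨z j, card_pos.2 ⟨j, by simp [hj, hρ1]⟩⟩
  obtain ⟨c, hc⟩ := Nat.findGreatest_spec hS.card_pos hP1
  refine ⟨_, c, Nat.le_findGreatest hS.card_pos hP1, hc, fun k hk c' => ?_⟩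
  by_contra! hck
  exact Nat.findGreatest_is_greatest hk (hck.trans (card_filter_le _ _)) ⟨c', hck⟩

theorem exists_balls_card_mem_ball_lt (hρ : Monotone ρ) (hρ1 : 0 < ρ 1) (S : Finset ι) :
    ∃ (l : ℕ) (c : Fin l → X) (p : Fin l → ℕ), (S.Nonempty → 0 < l) ∧ (∀ i, 1 ≤ p i) ∧
      ∑ i, p i ≤ #S ∧ ∀ w, (∀ i, w ∉ ball (c i) (2 * ρ (p i))) →
        ∀ k, 1 ≤ k → #{j ∈ S | z j ∈ ball w (ρ k)} < k := by
  induction S using Finset.strongInduction with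
  | H S ih =>
  rcases S.eq_empty_or_nonempty with rfl | hS
  · exact ⟨0, Fin.elim0, Fin.elim0, by simp, fun i => i.elim0, by simp, fun _ _ k hk => by simpa⟩
  obtain ⟨p, c, hp1, hpT, hmax⟩ := exists_maximal_ball z ρ hρ1 hS
  set T := {j ∈ S | z j ∈ ball c (ρ p)}
  have hT : T.Nonempty := card_pos.1 (hp1.trans hpT)
  obtain ⟨l, c', p', -, hp'1, hp'sum, hcount⟩ :=
    ih (S \ T) (sdiff_ssubset (filter_subset _ _) hT)
  refine ⟨l + 1, Fin.cons c c', Fin.cons p p', fun _ => l.succ_pos,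
    Fin.cases hp1 hp'1, ?_, fun w hw k hk => ?_⟩
  · have hST : #(S \ T) = #S - #T := card_sdiff_of_subset (filter_subset _ _)
    have hTS : #T ≤ #S := card_filter_le _ _
    rw [Fin.sum_cons]
    omega
  have hwc : w ∉ ball c (2 * ρ p) := by simpa using hw 0
  have hwc' : ∀ i, w ∉ ball (c' i) (2 * ρ (p' i)) := fun i => by simpa using hw i.succ
  rcases le_or_gt k p with hkp | hpk
  · refine lt_of_le_of_lt (card_le_card fun j => ?_) (hcount w hwc' k hk)
    simp only [mem_filter, mem_sdiff]
    refine fun ⟨hjS, hjw⟩ => ⟨⟨hjS, fun hjT => hwc ?_⟩, hjw⟩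
    have hjc : dist (z j) c < ρ p := (mem_filter.1 hjT).2
    rw [mem_ball] at hjw ⊢
    linarith [dist_triangle w (z j) c, dist_comm w (z j), hρ hkp]
  · exact hmax k hpk w

end Covering

theorem sum_one_div_le_of_card_lt {ι : Type*} (d : ι → ℝ) (ρ : ℕ → ℝ) (hρ : ∀ k, 0 < ρ (k + 1))
    (s : Finset ι) (h : ∀ k, 1 ≤ k → #{j ∈ s | d j < ρ k} < k) :
    ∑ j ∈ s, 1 / d j ≤ ∑ i ∈ range #s, 1 / ρ (i + 1) := by
  induction s using Finset.induction_on_max_value d with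
  | empty => simp
  | insert a s ha hmax ih =>
    have hs : ∀ k, 1 ≤ k → #{j ∈ s | d j < ρ k} < k := fun k hk =>
      (card_le_card (filter_subset_filter _ (subset_insert a s))).trans_lt (h k hk)
    have hfar : ρ (#s + 1) ≤ d a := by
      by_contra! hlt
      have hall : {j ∈ insert a s | d j < ρ (#s + 1)} = insert a s :=
        filter_true_of_mem fun j hj =>
          (mem_insert.1 hj).elim (fun hja => hja ▸ hlt) fun hjs => (hmax j hjs).trans_lt hlt
      have := h (#s + 1) le_add_self
      rw [hall, card_insert_of_notMem ha] at this
      exact lt_irrefl _ this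
    rw [sum_insert ha, card_insert_of_notMem ha, sum_range_succ, add_comm]
    exact add_le_add (ih hs) (one_div_le_one_div_of_le (hρ _) hfar)

theorem sum_range_one_div_sqrt_succ_le (n : ℕ) :
    ∑ i ∈ range n, 1 / √((i : ℝ) + 1) ≤ 2 * √n := by
  induction n with
  | zero => simp
  | succ n ih =>
    rw [sum_range_succ, Nat.cast_succ]
    have hb : 0 < √((n : ℝ) + 1) := by positivity
    have hstep : 1 / √((n : ℝ) + 1) ≤ 2 * √((n : ℝ) + 1) - 2 * √n := by
      rw [div_le_iff₀ hb]
      nlinarith [sq_nonneg (√((n : ℝ) + 1) - √n), Real.sq_sqrt (n.cast_nonneg : (0 : ℝ) ≤ n),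
        Real.sq_sqrt (by positivity : (0 : ℝ) ≤ n + 1)]
    linarith

namespace FuchsMacintyre

noncomputable def radius (m : ℕ) (H : ℝ) (k : ℕ) : ℝ := H * √k / √m

variable {m : ℕ} {H : ℝ}

theorem radius_pos (hm : 1 ≤ m) (hH : 0 < H) {k : ℕ} (hk : 1 ≤ k) : 0 < radius m H k := by
  have : (0 : ℝ) < k := by exact_mod_cast hk
  have : (0 : ℝ) < m := by exact_mod_cast hm
  unfold radius
  positivity

theorem monotone_radius (hH : 0 ≤ H) : Monotone (radius m H) := fun j k hjk => by
  unfold radius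
  gcongr

theorem two_mul_radius_sq (k : ℕ) : (2 * radius m H k) ^ 2 = 4 * H ^ 2 / m * k := by
  rw [radius, mul_pow, div_pow, mul_pow, Real.sq_sqrt k.cast_nonneg, Real.sq_sqrt m.cast_nonneg]
  ring

theorem sum_range_one_div_radius_succ_le (hH : 0 < H) :
    ∑ i ∈ range m, 1 / radius m H (i + 1) ≤ 2 * m / H := by
  calc ∑ i ∈ range m, 1 / radius m H (i + 1)
      = √m / H * ∑ i ∈ range m, 1 / √((i : ℝ) + 1) := by
        rw [mul_sum]
        refine sum_congr rfl fun i _ => ?_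
        rw [radius, Nat.cast_succ, one_div_div]
        ring
    _ ≤ √m / H * (2 * √m) := by gcongr; exact sum_range_one_div_sqrt_succ_le m
    _ = 2 * m / H := by
        rw [mul_left_comm, div_mul_eq_mul_div, Real.mul_self_sqrt m.cast_nonneg, mul_div_assoc]

end FuchsMacintyre

open FuchsMacintyre

/-- The covering lemma of Fuchs and Macintyre. -/
theorem fuchs_macintyre (m : ℕ) (hm : 1 ≤ m) (z : Fin m → ℂ) (H : ℝ) (hH : 0 < H) :
    ∃ l : ℕ, 1 ≤ l ∧ l ≤ m ∧ ∃ (c : Fin l → ℂ) (r : Fin l → ℝ),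
      (∀ k, 0 < r k) ∧ (∑ k, r k ^ 2) ≤ 4 * H ^ 2 ∧
      ∀ w : ℂ, (∀ k, w ∉ Metric.ball (c k) (r k)) →
        (∑ j, 1 / ‖w - z j‖) ≤ 2 * m / H := by
  obtain ⟨l, c, p, hl, hp1, hpsum, hcount⟩ := exists_balls_card_mem_ball_lt z (radius m H)
    (monotone_radius hH.le) (radius_pos hm hH le_rfl) univ
  rw [card_univ, Fintype.card_fin] at hpsum
  refine ⟨l, hl ⟨⟨0, hm⟩, mem_univ _⟩, ?_, c, fun i => 2 * radius m H (p i),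
    fun i => mul_pos two_pos (radius_pos hm hH (hp1 i)), ?_, fun w hw => ?_⟩
  · calc l = ∑ _ : Fin l, 1 := by simp
      _ ≤ ∑ i, p i := sum_le_sum fun i _ => hp1 i
      _ ≤ m := hpsum
  · have : (0 : ℝ) < m := by exact_mod_cast hm
    simp_rw [two_mul_radius_sq, ← mul_sum]
    calc 4 * H ^ 2 / m * ∑ i, (p i : ℝ) ≤ 4 * H ^ 2 / m * m := by gcongr; exact_mod_cast hpsum
      _ = 4 * H ^ 2 := div_mul_cancel₀ _ this.ne'
  · have hnear : ∀ k, 1 ≤ k → #{j | ‖w - z j‖ < radius m H k} < k := fun k hk => by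
      simpa [mem_ball, dist_eq_norm, norm_sub_rev] using hcount w hw k hk
    calc ∑ j, 1 / ‖w - z j‖ ≤ ∑ i ∈ range m, 1 / radius m H (i + 1) := by
          simpa using
            sum_one_div_le_of_card_lt _ _ (fun k => radius_pos hm hH le_add_self) univ hnear
      _ ≤ 2 * m / H := sum_range_one_div_radius_succ_le hH
end

section
/- Let f be an entire function of finite order, not identically zero, and let n(r) denote the number of zeros of f (counted with multiplicity) in {|z| ≤ r}. Suppose there exist r₀ > 0 and K > 1 such that n(2r) ≤ K·n(r) for all r ≥ r₀. For μ > 0 let F_μ be the set of all r ≥ r₀ such that n(t) ≤ (t/r)^μ·n(r) for all t ≥ r and n(t) ≥ (t/r)^μ·n(r) for all r₀ ≤ t ≤ r. Then, given δ > 0, there exists μ > 0 such that the Lebesgue measure of F_μ ∩ [R, 2R] is at least (1 − δ)·R for all R ≥ 2r₀. -/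
open scoped ENNReal

/-- The maximum modulus `M(r,f) = max_{|z|=r} |f(z)|`. -/
noncomputable def maxMod (f : ℂ → ℂ) (r : ℝ) : ℝ :=
  sSup ((fun z => ‖f z‖) '' Metric.sphere (0 : ℂ) r)

/-- The order of growth `ρ(f) = limsup_{r→∞} log log M(r,f) / log r` (as an extended real). -/
noncomputable def orderOfGrowth (f : ℂ → ℂ) : EReal :=
  Filter.limsup
    (fun r : ℝ => ((Real.log (Real.log (maxMod f r)) / Real.log r : ℝ) : EReal)) Filter.atTop

/-- The multiplicity of `z₀` as a zero of `g`. -/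
noncomputable def zeroMult (g : ℂ → ℂ) (z₀ : ℂ) : ℕ :=
  sSup {m : ℕ | ∃ h : ℂ → ℂ, AnalyticAt ℂ h z₀ ∧ ∀ᶠ z in nhds z₀, g z = (z - z₀) ^ m * h z}

/-- The zero-counting function `n(r)`: the number of zeros of `f` (with multiplicity)
in the closed disk of radius `r` about the origin. -/
noncomputable def countZeros (f : ℂ → ℂ) (r : ℝ) : ℕ :=
  ∑ᶠ z ∈ Metric.closedBall (0 : ℂ) r, zeroMult f z

/-!
Write `n` for the zero-counting function, a nonnegative monotone function with
`n (2r) ≤ K n(r)`; iterating the doubling gives `n t ≤ (t/r)^{2 log₂ K} n r` once `t ≥ 2r`.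
So a radius `r ≥ r₀` can only fail to lie in `F_μ` through a jump `(b/a)^μ n(a) < n(b)` on an
interval `a ≤ r ≤ b < 2a`, and by Bernoulli's inequality such a jump gives the Stieltjes
measure `dn` of `[a, b]` mass at least `μ n(R/2) (b - a) / (2R)` when `r ∈ [R, 2R]`.
By the Vitali covering lemma the jump radii in `[R, 2R]` then have measure
`O(R / (μ n(R/2)))` times the mass `n(8R) ≤ K⁴ n(R/2)` of `dn` near `[R, 2R]`, that is
`O(K⁴ R / μ)`, which is below `δ R` for large `μ`.
-/

open Set Filter MeasureTheory Metric

lemma zeroMult_eq_zero_of_ne_zero {g : ℂ → ℂ} {z₀ : ℂ} (h : g z₀ ≠ 0) : zeroMult g z₀ = 0 := by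
  refine Nat.eq_zero_of_le_zero (csSup_le' fun m ⟨φ, _, hφ⟩ => ?_)
  by_contra! hm
  exact h (by simpa [zero_pow hm.ne'] using hφ.self_of_nhds)

lemma Differentiable.finite_closedBall_inter_preimage_zero {f : ℂ → ℂ} (hf : Differentiable ℂ f)
    (hne : ∃ z, f z ≠ 0) (r : ℝ) : (closedBall 0 r ∩ f ⁻¹' {0}).Finite := by
  obtain ⟨w, hw⟩ := hne
  have hcod : f ⁻¹' {0}ᶜ ∈ codiscreteWithin (closedBall (0 : ℂ) r) :=
    codiscreteWithin_mono (subset_univ _)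
      (AnalyticOnNhd.preimage_zero_mem_codiscrete (fun z _ => hf.analyticAt z) hw)
  simpa [sdiff_compl] using (isCompact_closedBall 0 r).finite_sdiff_of_mem_codiscreteWithin hcod

lemma countZeros_mono {f : ℂ → ℂ} (hf : Differentiable ℂ f) (hne : ∃ z, f z ≠ 0) :
    Monotone (countZeros f) := by
  intro u v huv
  have hfin : (closedBall 0 v ∩ Function.support (zeroMult f)).Finite :=
    (hf.finite_closedBall_inter_preimage_zero hne v).subset fun z ⟨hz, hm⟩ =>
      ⟨hz, by_contra fun hfz => hm (zeroMult_eq_zero_of_ne_zero hfz)⟩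
  unfold countZeros
  rw [← finsum_mem_add_sdiff' (closedBall_subset_closedBall huv) hfin]
  exact Nat.le_add_right _ _

lemma mul_sub_div_mul_le_sub_of_rpow_mul_lt {a b μ x y : ℝ} (ha : 0 < a) (hab : a ≤ b)
    (hμ : 1 ≤ μ) (hx : 0 ≤ x) (h : (b / a) ^ μ * x < y) : μ * (b - a) / a * x ≤ y - x := by
  have hs : -1 ≤ b / a - 1 := by
    have : 0 ≤ b / a := div_nonneg (ha.le.trans hab) ha.le
    linarith
  have hbernoulli : 1 + μ * (b / a - 1) ≤ (b / a) ^ μ := by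
    simpa using one_add_mul_self_le_rpow_one_add hs hμ
  have hba : μ * (b - a) / a = μ * (b / a - 1) := by field_simp
  rw [hba]
  nlinarith

lemma rpow_div_mul_le_iff {a b μ x y : ℝ} (ha : 0 < a) (hb : 0 < b) :
    (a / b) ^ μ * y ≤ x ↔ y ≤ (b / a) ^ μ * x := by
  rw [← inv_div b a, Real.inv_rpow (div_pos hb ha).le,
    inv_mul_le_iff₀ (Real.rpow_pos_of_pos (div_pos hb ha) μ)]

lemma volume_le_of_forall_mem_closedBall {ν : Measure ℝ} {E S : Set ℝ} {c C : ℝ} (hC : 0 < C)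
    (h : ∀ x ∈ E, ∃ y ρ, 0 < ρ ∧ ρ ≤ c ∧ x ∈ closedBall y ρ ∧ closedBall y ρ ⊆ S ∧
      ENNReal.ofReal (C * ρ) ≤ ν (closedBall y ρ)) :
    volume E ≤ ENNReal.ofReal (8 / C) * ν S := by
  choose! y ρ hρ hρc hxρ hρS hνρ using h
  obtain ⟨u, huE, hdisj, hcov⟩ :=
    Vitali.exists_disjoint_subfamily_covering_enlargement_closedBall E y ρ c hρc 4 (by norm_num)
  have hu : u.Countable := hdisj.countable_of_nonempty_interior fun a ha => by
    rw [interior_closedBall _ (hρ a (huE ha)).ne']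
    exact nonempty_ball.2 (hρ a (huE ha))
  have henlarge : ∀ b ∈ u, volume (closedBall (y b) (4 * ρ b)) ≤
      ENNReal.ofReal (8 / C) * ν (closedBall (y b) (ρ b)) := fun b hb => by
    calc volume (closedBall (y b) (4 * ρ b))
        = ENNReal.ofReal (8 / C) * ENNReal.ofReal (C * ρ b) := by
          rw [Real.volume_closedBall, ← ENNReal.ofReal_mul (by positivity)]
          congr 1
          field_simp
          ring
      _ ≤ _ := by gcongr; exact hνρ b (huE hb)
  calc volume E ≤ volume (⋃ b ∈ u, closedBall (y b) (4 * ρ b)) := measure_mono fun x hx => by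
        obtain ⟨b, hb, hsub⟩ := hcov x hx
        exact mem_biUnion hb (hsub (hxρ x hx))
    _ ≤ ∑' b : u, volume (closedBall (y b) (4 * ρ b)) := measure_biUnion_le _ hu _
    _ ≤ ∑' b : u, ENNReal.ofReal (8 / C) * ν (closedBall (y b) (ρ b)) :=
        ENNReal.tsum_le_tsum fun b => henlarge b b.2
    _ = ENNReal.ofReal (8 / C) * ν (⋃ b ∈ u, closedBall (y b) (ρ b)) := by
        rw [ENNReal.tsum_mul_left, measure_biUnion hu hdisj fun _ _ => measurableSet_closedBall]
    _ ≤ ENNReal.ofReal (8 / C) * ν S := by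
        gcongr
        exact iUnion₂_subset fun b hb => hρS b (huE hb)

lemma Monotone.ofReal_sub_le_stieltjesFunction_measure_Icc {n : ℝ → ℝ} (hn : Monotone n)
    (a b : ℝ) : ENNReal.ofReal (n b - n a) ≤ hn.stieltjesFunction.measure (Icc a b) := by
  rw [StieltjesFunction.measure_Icc]
  have hleft : Function.leftLim hn.stieltjesFunction a = Function.leftLim n a :=
    leftLim_rightLim (hn.tendsto_leftLim a)
  gcongr
  · exact hn.le_rightLim le_rfl
  · rw [hleft]
    exact hn.leftLim_le le_rfl

lemma Monotone.stieltjesFunction_measure_Ioc_le {n : ℝ → ℝ} (hn : Monotone n) {a b c : ℝ}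
    (ha : 0 ≤ n a) (hbc : b < c) :
    hn.stieltjesFunction.measure (Ioc a b) ≤ ENNReal.ofReal (n c) := by
  rw [StieltjesFunction.measure_Ioc]
  have h1 : n a ≤ hn.stieltjesFunction a := hn.le_rightLim le_rfl
  have h2 : hn.stieltjesFunction b ≤ n c := hn.rightLim_le hbc
  exact ENNReal.ofReal_le_ofReal (by linarith)

def HasRpowJumpAt (n : ℝ → ℝ) (μ r : ℝ) : Prop :=
  ∃ a b, a ≤ r ∧ r ≤ b ∧ b < 2 * a ∧ (b / a) ^ μ * n a < n b

section Doubling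

variable {n : ℝ → ℝ} {r₀ K : ℝ}

lemma le_pow_mul_of_doubling (hr₀ : 0 ≤ r₀) (hK : 0 ≤ K)
    (hdbl : ∀ r, r₀ ≤ r → n (2 * r) ≤ K * n r) (k : ℕ) {r : ℝ} (hr : r₀ ≤ r) :
    n (2 ^ k * r) ≤ K ^ k * n r := by
  induction k with
  | zero => simp
  | succ k ih =>
    have hk : r₀ ≤ 2 ^ k * r :=
      hr.trans (le_mul_of_one_le_left (hr₀.trans hr) (one_le_pow₀ one_le_two))
    calc n (2 ^ (k + 1) * r) = n (2 * (2 ^ k * r)) := by ring_nf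
      _ ≤ K * n (2 ^ k * r) := hdbl _ hk
      _ ≤ K * (K ^ k * n r) := by gcongr
      _ = K ^ (k + 1) * n r := by ring

lemma Monotone.le_mul_rpow_logb_mul_of_doubling (hmono : Monotone n) (hr₀ : 0 < r₀) (hK : 1 ≤ K)
    (hdbl : ∀ r, r₀ ≤ r → n (2 * r) ≤ K * n r) {r t : ℝ} (hr : r₀ ≤ r) (hrt : r ≤ t)
    (hnr : 0 ≤ n r) : n t ≤ K * (t / r) ^ Real.logb 2 K * n r := by
  have hr0 : 0 < r := hr₀.trans_le hr
  obtain ⟨k, hk, hk'⟩ := exists_nat_pow_near ((one_le_div hr0).2 hrt) one_lt_two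
  have hKk : K ^ k = ((2 : ℝ) ^ k) ^ Real.logb 2 K := by
    rw [← Real.rpow_natCast_mul zero_le_two, mul_comm, Real.rpow_mul_natCast zero_le_two,
      Real.rpow_logb two_pos (by norm_num) (by linarith)]
  calc n t ≤ n (2 ^ (k + 1) * r) := hmono ((div_le_iff₀ hr0).1 hk'.le)
    _ ≤ K ^ (k + 1) * n r := le_pow_mul_of_doubling hr₀.le (by linarith) hdbl _ hr
    _ = K * ((2 : ℝ) ^ k) ^ Real.logb 2 K * n r := by rw [pow_succ, hKk]; ring
    _ ≤ K * (t / r) ^ Real.logb 2 K * n r := by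
        gcongr
        exact Real.logb_nonneg one_lt_two hK

lemma Monotone.le_rpow_mul_of_doubling (hmono : Monotone n) (hr₀ : 0 < r₀) (hK : 1 ≤ K)
    (hdbl : ∀ r, r₀ ≤ r → n (2 * r) ≤ K * n r) {μ : ℝ} (hμ : 2 * Real.logb 2 K ≤ μ) {r t : ℝ}
    (hr : r₀ ≤ r) (hrt : 2 * r ≤ t) (hnr : 0 ≤ n r) : n t ≤ (t / r) ^ μ * n r := by
  have hr0 : 0 < r := hr₀.trans_le hr
  have htr : 2 ≤ t / r := (le_div_iff₀ hr0).2 hrt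
  have hL : 0 ≤ Real.logb 2 K := Real.logb_nonneg one_lt_two hK
  calc n t ≤ K * (t / r) ^ Real.logb 2 K * n r :=
        hmono.le_mul_rpow_logb_mul_of_doubling hr₀ hK hdbl hr (by linarith) hnr
    _ ≤ (t / r) ^ Real.logb 2 K * (t / r) ^ Real.logb 2 K * n r := by
        gcongr
        calc K = 2 ^ Real.logb 2 K := (Real.rpow_logb two_pos (by norm_num) (by linarith)).symm
          _ ≤ (t / r) ^ Real.logb 2 K := by gcongr
    _ = (t / r) ^ (2 * Real.logb 2 K) * n r := by
        rw [← Real.rpow_add (by linarith), two_mul]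
    _ ≤ (t / r) ^ μ * n r := by
        gcongr
        linarith

lemma Monotone.volume_setOf_hasRpowJumpAt_le (hmono : Monotone n) (hn : ∀ r, 0 ≤ n r)
    (hr₀ : 0 < r₀) (hK : 0 ≤ K) (hdbl : ∀ r, r₀ ≤ r → n (2 * r) ≤ K * n r) {μ : ℝ} (hμ : 1 ≤ μ)
    {R : ℝ} (hR : 2 * r₀ ≤ R) :
    volume {r ∈ Icc R (2 * R) | HasRpowJumpAt n μ r} ≤ ENNReal.ofReal (8 * K ^ 4 * R / μ) := by
  have hR0 : 0 < R := by linarith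
  have hRr₀ : r₀ ≤ R / 2 := by linarith
  rcases (hn (R / 2)).eq_or_lt with hzero | hpos
  · suffices {r ∈ Icc R (2 * R) | HasRpowJumpAt n μ r} = ∅ by
      rw [this, measure_empty]
      exact bot_le
    refine eq_empty_of_forall_notMem ?_
    rintro r ⟨⟨hRr, hr2R⟩, a, b, har, hrb, hba, hjump⟩
    have hnb : n b ≤ 0 := calc
      n b ≤ n (2 ^ 3 * (R / 2)) := hmono (by linarith)
      _ ≤ K ^ 3 * n (R / 2) := le_pow_mul_of_doubling hr₀.le hK hdbl 3 hRr₀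
      _ = 0 := by rw [← hzero, mul_zero]
    have hba0 : 0 ≤ b / a := div_nonneg (by linarith) (by linarith)
    nlinarith [mul_nonneg (Real.rpow_nonneg hba0 μ) (hn a)]
  set C := μ * n (R / 2) / R
  refine (volume_le_of_forall_mem_closedBall (ν := hmono.stieltjesFunction.measure)
    (S := Ioc (R / 4) (4 * R)) (c := R) (C := C) (by positivity) ?_).trans ?_
  · rintro r ⟨⟨hRr, hr2R⟩, a, b, har, hrb, hba, hjump⟩
    have ha : R / 2 ≤ a := by linarith
    have hab : a < b := (har.trans hrb).lt_of_ne <| by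
      rintro rfl
      simp [div_self (by linarith : a ≠ 0)] at hjump
    have hball : closedBall ((a + b) / 2) ((b - a) / 2) = Icc a b := by
      rw [Real.closedBall_eq_Icc]
      congr 1 <;> ring
    refine ⟨(a + b) / 2, (b - a) / 2, by linarith, by linarith, ?_⟩
    rw [hball]
    refine ⟨⟨har, hrb⟩, Icc_subset_Ioc (by linarith) (by linarith), ?_⟩
    refine (ENNReal.ofReal_le_ofReal ?_).trans
      (hmono.ofReal_sub_le_stieltjesFunction_measure_Icc a b)
    calc C * ((b - a) / 2) = μ * (b - a) / (2 * R) * n (R / 2) := by ring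
      _ ≤ μ * (b - a) / a * n a := by
          gcongr
          · exact div_nonneg (mul_nonneg (by linarith) (sub_nonneg.2 hab.le)) (by linarith)
          · linarith
          · linarith
          · exact hmono ha
      _ ≤ n b - n a := mul_sub_div_mul_le_sub_of_rpow_mul_lt (by linarith) hab.le hμ (hn a) hjump
  · calc _ ≤ ENNReal.ofReal (8 / C) * ENNReal.ofReal (K ^ 4 * n (R / 2)) := by
          gcongr
          refine (hmono.stieltjesFunction_measure_Ioc_le (hn _)
            (by linarith : 4 * R < 2 ^ 4 * (R / 2))).trans ?_
          exact ENNReal.ofReal_le_ofReal (le_pow_mul_of_doubling hr₀.le hK hdbl 4 hRr₀)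
      _ = ENNReal.ofReal (8 * K ^ 4 * R / μ) := by
          rw [← ENNReal.ofReal_mul (by positivity)]
          congr 1
          simp only [C]
          field_simp

lemma Monotone.rpow_growth_of_not_hasRpowJumpAt (hmono : Monotone n) (hn : ∀ r, 0 ≤ n r)
    (hr₀ : 0 < r₀) (hK : 1 ≤ K) (hdbl : ∀ r, r₀ ≤ r → n (2 * r) ≤ K * n r) {μ : ℝ}
    (hμ : 2 * Real.logb 2 K ≤ μ) {r : ℝ} (hr : r₀ ≤ r) (hjump : ¬ HasRpowJumpAt n μ r) :
    (∀ t, r ≤ t → n t ≤ (t / r) ^ μ * n r) ∧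
      (∀ t, r₀ ≤ t → t ≤ r → (t / r) ^ μ * n r ≤ n t) := by
  have key : ∀ a b, r₀ ≤ a → a ≤ r → r ≤ b → n b ≤ (b / a) ^ μ * n a := fun a b ha har hrb => by
    rcases lt_or_ge b (2 * a) with hb | hb
    · exact not_lt.1 fun h => hjump ⟨a, b, har, hrb, hb, h⟩
    · exact hmono.le_rpow_mul_of_doubling hr₀ hK hdbl hμ ha hb (hn a)
  refine ⟨fun t hrt => key r t hr le_rfl hrt, fun t ht htr => ?_⟩
  exact (rpow_div_mul_le_iff (hr₀.trans_le ht) (hr₀.trans_le hr)).2 (key t r ht htr le_rfl)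

theorem Monotone.exists_rpow_growth_volume_ge (hmono : Monotone n) (hn : ∀ r, 0 ≤ n r)
    (hr₀ : 0 < r₀) (hK : 1 ≤ K) (hdbl : ∀ r, r₀ ≤ r → n (2 * r) ≤ K * n r) {δ : ℝ}
    (hδ : 0 < δ) :
    ∃ μ > (0 : ℝ), ∀ R, 2 * r₀ ≤ R →
      ENNReal.ofReal ((1 - δ) * R) ≤
        volume ({r : ℝ | r₀ ≤ r ∧ (∀ t, r ≤ t → n t ≤ (t / r) ^ μ * n r) ∧
            (∀ t, r₀ ≤ t → t ≤ r → (t / r) ^ μ * n r ≤ n t)} ∩ Icc R (2 * R)) := by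
  set μ := max 1 (max (2 * Real.logb 2 K) (8 * K ^ 4 / δ))
  have hμ1 : 1 ≤ μ := le_max_left _ _
  have hμL : 2 * Real.logb 2 K ≤ μ := (le_max_left _ _).trans (le_max_right _ _)
  have hμδ : 8 * K ^ 4 / δ ≤ μ := (le_max_right _ _).trans (le_max_right _ _)
  refine ⟨μ, by positivity, fun R hR => ?_⟩
  have hR0 : 0 < R := by linarith
  set B := {r ∈ Icc R (2 * R) | HasRpowJumpAt n μ r}
  have hB : volume B ≤ ENNReal.ofReal (δ * R) := by
    refine (hmono.volume_setOf_hasRpowJumpAt_le hn hr₀ (by linarith) hdbl hμ1 hR).trans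
      (ENNReal.ofReal_le_ofReal ?_)
    rw [div_le_iff₀ (by positivity)]
    have := (div_le_iff₀ hδ).1 hμδ
    nlinarith
  have hgood : Icc R (2 * R) \ B ⊆ {r : ℝ | r₀ ≤ r ∧ (∀ t, r ≤ t → n t ≤ (t / r) ^ μ * n r) ∧
      (∀ t, r₀ ≤ t → t ≤ r → (t / r) ^ μ * n r ≤ n t)} ∩ Icc R (2 * R) := by
    rintro r ⟨hr, hrB⟩
    have hr₀r : r₀ ≤ r := by linarith [hr.1]
    exact ⟨⟨hr₀r, hmono.rpow_growth_of_not_hasRpowJumpAt hn hr₀ hK hdbl hμL hr₀r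
      fun h => hrB ⟨hr, h⟩⟩, hr⟩
  calc ENNReal.ofReal ((1 - δ) * R) = ENNReal.ofReal R - ENNReal.ofReal (δ * R) := by
        rw [← ENNReal.ofReal_sub _ (by positivity)]
        ring_nf
    _ ≤ volume (Icc R (2 * R)) - volume B := by
        rw [Real.volume_Icc, show 2 * R - R = R by ring]
        gcongr
    _ ≤ volume (Icc R (2 * R) \ B) := le_measure_sdiff
    _ ≤ _ := measure_mono hgood

end Doubling

theorem measure_Fmu_inter_general (f : ℂ → ℂ)
    (hf : Differentiable ℂ f)
    (hne : ∃ z, f z ≠ 0)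
    (r₀ K : ℝ) (hr₀ : 0 < r₀) (hK : 1 < K)
    (hdbl : ∀ r, r₀ ≤ r → (countZeros f (2 * r) : ℝ) ≤ K * (countZeros f r : ℝ))
    (δ : ℝ) (hδ : 0 < δ) :
    ∃ μ > (0:ℝ), ∀ R, 2 * r₀ ≤ R →
      ENNReal.ofReal ((1 - δ) * R) ≤
        MeasureTheory.volume
          ({r : ℝ | r₀ ≤ r ∧
            (∀ t, r ≤ t → (countZeros f t : ℝ) ≤ (t / r) ^ μ * (countZeros f r : ℝ)) ∧
            (∀ t, r₀ ≤ t → t ≤ r → (t / r) ^ μ * (countZeros f r : ℝ) ≤ (countZeros f t : ℝ))}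
            ∩ Set.Icc R (2 * R)) :=
  (Nat.mono_cast.comp (countZeros_mono hf hne)).exists_rpow_growth_volume_ge
    (fun _ => Nat.cast_nonneg _) hr₀ hK.le hdbl hδ

theorem measure_Fmu_inter (f : ℂ → ℂ)
    (hf : Differentiable ℂ f)
    (hfin : orderOfGrowth f < ⊤)
    (hne : ∃ z, f z ≠ 0)
    (r₀ K : ℝ) (hr₀ : 0 < r₀) (hK : 1 < K)
    (hdbl : ∀ r, r₀ ≤ r → (countZeros f (2 * r) : ℝ) ≤ K * (countZeros f r : ℝ))
    (δ : ℝ) (hδ : 0 < δ) :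
    ∃ μ > (0:ℝ), ∀ R, 2 * r₀ ≤ R →
      ENNReal.ofReal ((1 - δ) * R) ≤
        MeasureTheory.volume
          ({r : ℝ | r₀ ≤ r ∧
            (∀ t, r ≤ t → (countZeros f t : ℝ) ≤ (t / r) ^ μ * (countZeros f r : ℝ)) ∧
            (∀ t, r₀ ≤ t → t ≤ r → (t / r) ^ μ * (countZeros f r : ℝ) ≤ (countZeros f t : ℝ))}
            ∩ Set.Icc R (2 * R)) :=
  measure_Fmu_inter_general f hf hne r₀ K hr₀ hK hdbl δ hδ
end
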